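/- arXiv:2011.07922 — 2 statements merged into one kernel-verified Lean document; each statement's English description precedes it below -/
import Mathlib

section
/- For every prime N and every τ in the complex upper half-plane ℍ, ∑_{b=0}^{N−1} E₂^{(N)}((τ+b)/N) = N·E₂^{(N)}(τ); that is, E₂^{(N)} is an eigenform of the Atkin–Lehner operator U_N (defined by (U_N f)(τ) = (1/N)·∑_{b=0}^{N−1} f((τ+b)/N)) with eigenvalue +1. -/
/-!
Write `E₂ = 1 - 24 ∑ σ(n) qⁿ` with `q = e^{2πiτ}`. Averaging a q-series over the translates
`(τ + b)/N` keeps exactly the coefficients at multiples of `N` (orthogonality of the `N`-th roots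
of unity), so `∑_b E₂((τ + b)/N) = N (1 - 24 ∑ σ(Nm) qᵐ)`. For prime `N` the Hecke relation
`σ(Nm) = (N + 1) σ(m) - N σ(m/N)` turns this into `N ((N + 1) E₂(τ) - N E₂(Nτ))`, i.e. `E₂` is a
`T_N`-eigenform with eigenvalue `N + 1`. Since `E₂(N (τ + b)/N) = E₂(τ)` by periodicity, the
eigenvalue equation for `E₂^{(N)}` follows by linear algebra.
-/

open Complex

noncomputable def sigma1 (n : ℕ) : ℕ := ∑ d ∈ n.divisors, d

noncomputable def E2 (τ : ℂ) : ℂ :=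
  1 - 24 * ∑' n : ℕ, (sigma1 (n + 1) : ℂ) * Complex.exp (2 * Real.pi * I * (n + 1) * τ)

/-- The weight-two Eisenstein series of Γ₀(N): E₂^{(N)}(τ) = (N·E₂(Nτ) − E₂(τ))/(N−1). -/
noncomputable def E2N (N : ℕ) (τ : ℂ) : ℂ :=
  ((N : ℂ) * E2 ((N : ℂ) * τ) - E2 τ) / ((N : ℂ) - 1)

open Finset Function.Periodic ArithmeticFunction
open scoped Real ArithmeticFunction.sigma

theorem IsPrimitiveRoot.geom_sum_pow_eq_ite {K : Type*} [Field K] {ζ : K} {k : ℕ}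
    (hζ : IsPrimitiveRoot ζ k) (n : ℕ) :
    ∑ i ∈ range k, (ζ ^ n) ^ i = if k ∣ n then (k : K) else 0 := by
  split_ifs with h
  · simp [(hζ.pow_eq_one_iff_dvd n).mpr h]
  · have hζn : (ζ ^ n) ^ k = 1 := by rw [← pow_mul, mul_comm, pow_mul, hζ.pow_eq_one, one_pow]
    rw [geom_sum_eq (mt (hζ.pow_eq_one_iff_dvd n).mp h), hζn, sub_self, zero_div]

theorem tsum_eq_tsum_mul_of_forall_not_dvd {α : Type*} [AddCommMonoid α] [TopologicalSpace α]
    {N : ℕ} (hN : N ≠ 0) {f : ℕ → α} (hf : ∀ n, ¬ N ∣ n → f n = 0) :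
    ∑' n, f n = ∑' m, f (N * m) := by
  refine (Function.Injective.tsum_eq (mul_right_injective₀ hN) fun n hn => ?_).symm
  obtain ⟨m, rfl⟩ : N ∣ n := not_not.mp (mt (hf n) hn)
  exact ⟨m, rfl⟩

lemma qParam_one_add_natCast (z : ℂ) (b : ℕ) : qParam 1 (z + b) = qParam 1 z := by
  simp only [qParam, ofReal_one, div_one, mul_add, exp_add]
  rw [mul_comm _ (b : ℂ), exp_nat_mul_two_pi_mul_I, mul_one]

lemma qParam_one_natCast_mul (N : ℕ) (z : ℂ) : qParam 1 (N * z) = qParam 1 z ^ N := by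
  simp only [qParam, ofReal_one, div_one, ← exp_nat_mul]
  ring_nf

lemma qParam_pow_self {N : ℕ} (hN : N ≠ 0) (z : ℂ) : qParam N z ^ N = qParam 1 z := by
  simp only [qParam, ofReal_one, div_one, ofReal_natCast, ← exp_nat_mul]
  congr 1
  field_simp

lemma qParam_one_add_div {N : ℕ} (hN : N ≠ 0) (z : ℂ) (b : ℕ) :
    qParam 1 ((z + b) / N) = qParam N z * exp (2 * π * I / N) ^ b := by
  simp only [qParam, ofReal_one, div_one, ofReal_natCast, ← exp_nat_mul, ← exp_add]
  congr 1
  field_simp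

noncomputable def qSeries (a : ℕ → ℂ) (τ : ℂ) : ℂ := ∑' n, a n * qParam 1 τ ^ n

theorem summable_mul_qParam_pow {a : ℕ → ℂ} {C : ℝ} {k : ℕ} (ha : ∀ n, ‖a n‖ ≤ C * n ^ k)
    {z : ℂ} (hz : 0 < z.im) : Summable fun n => a n * qParam 1 z ^ n := by
  have hq := norm_qParam_lt_one one_pos hz
  refine Summable.of_norm_bounded
    ((summable_norm_pow_mul_geometric_of_norm_lt_one k hq).mul_left C) fun n => ?_
  rw [norm_mul, norm_mul, norm_pow, norm_pow, Complex.norm_natCast, ← mul_assoc]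
  exact mul_le_mul_of_nonneg_right (ha n) (by positivity)

lemma qSeries_add_natCast (a : ℕ → ℂ) (z : ℂ) (b : ℕ) : qSeries a (z + b) = qSeries a z := by
  simp only [qSeries, qParam_one_add_natCast]

lemma qSeries_natCast_mul {N : ℕ} (hN : N ≠ 0) (a : ℕ → ℂ) (z : ℂ) :
    qSeries a (N * z) = qSeries (fun n => if N ∣ n then a (n / N) else 0) z := by
  rw [qSeries, qSeries, tsum_eq_tsum_mul_of_forall_not_dvd hN (f := fun n => ite _ _ _ * _)
    fun n hn => by rw [if_neg hn, zero_mul]]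
  congr 1 with m
  rw [if_pos (dvd_mul_right N m), Nat.mul_div_cancel_left m (Nat.pos_of_ne_zero hN),
    qParam_one_natCast_mul, pow_mul]

theorem sum_qSeries_add_div {N : ℕ} (hN : N ≠ 0) {a : ℕ → ℂ}
    (ha : ∀ z : ℂ, 0 < z.im → Summable fun n => a n * qParam 1 z ^ n) {τ : ℂ} (hτ : 0 < τ.im) :
    ∑ b ∈ range N, qSeries a ((τ + b) / N) = N * qSeries (fun m => a (N * m)) τ := by
  have him (b : ℕ) : 0 < ((τ + b) / N).im := by
    rw [div_natCast_im, add_im, natCast_im, add_zero]; positivity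
  have hterm (n : ℕ) : ∑ b ∈ range N, a n * qParam 1 ((τ + b) / N) ^ n
      = if N ∣ n then N * (a n * qParam N τ ^ n) else 0 := by
    simp_rw [qParam_one_add_div hN, mul_pow, ← pow_mul, mul_comm _ n, pow_mul, ← mul_assoc,
      ← mul_sum, (isPrimitiveRoot_exp N hN).geom_sum_pow_eq_ite]
    split_ifs <;> ring
  simp only [qSeries]
  rw [← Summable.tsum_finsetSum fun b _ => ha _ (him b), tsum_congr hterm,
    tsum_eq_tsum_mul_of_forall_not_dvd hN fun n hn => if_neg hn, ← tsum_mul_left]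
  congr 1 with m
  rw [if_pos (dvd_mul_right N m), pow_mul, qParam_pow_self hN]

lemma sigma_one_prime_pow_succ {p : ℕ} (hp : p.Prime) (i : ℕ) :
    σ 1 (p ^ (i + 1)) = p * σ 1 (p ^ i) + 1 := by
  rw [sigma_one_apply_prime_pow hp, sigma_one_apply_prime_pow hp, geom_sum_succ]

/-- The Hecke relation `σ(p m) = (p + 1) σ(m) - p σ(m / p)`, with `σ(m / p) := 0` for `p ∤ m`. -/
theorem sigma_one_prime_mul_add {p : ℕ} (hp : p.Prime) (m : ℕ) :
    σ 1 (p * m) + p * (if p ∣ m then σ 1 (m / p) else 0) = (p + 1) * σ 1 m := by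
  rcases eq_or_ne m 0 with rfl | hm
  · simp
  obtain ⟨e, m', hpm', rfl⟩ := Nat.exists_eq_pow_mul_and_not_dvd hm p hp.ne_one
  have hmul (i : ℕ) : σ 1 (p ^ i * m') = σ 1 (p ^ i) * σ 1 m' :=
    isMultiplicative_sigma.map_mul_of_coprime ((hp.coprime_iff_not_dvd.mpr hpm').pow_left i)
  rw [← mul_assoc, ← pow_succ', hmul, hmul]
  cases e with
  | zero =>
    rw [pow_zero, one_mul, if_neg hpm', sigma_one_prime_pow_succ hp, pow_zero, sigma_one_apply,
      Nat.divisors_one, sum_singleton]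
    ring
  | succ e =>
    have hdiv : p ^ (e + 1) * m' / p = p ^ e * m' := by
      rw [pow_succ', mul_assoc, Nat.mul_div_cancel_left _ hp.pos]
    rw [if_pos ((dvd_pow_self p e.succ_ne_zero).mul_right m'), hdiv, hmul,
      sigma_one_prime_pow_succ hp (e + 1), sigma_one_prime_pow_succ hp e]
    ring

lemma sigma1_eq_sigma_one : sigma1 = σ 1 := funext fun n => (sigma_one_apply n).symm

lemma norm_sigma_one_le (n : ℕ) : ‖(σ 1 n : ℂ)‖ ≤ n ^ 2 := by
  rw [Complex.norm_natCast]
  exact_mod_cast sigma_le_pow_succ 1 n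

lemma summable_sigma_one_mul_qParam_pow {z : ℂ} (hz : 0 < z.im) :
    Summable fun n => (σ 1 n : ℂ) * qParam 1 z ^ n :=
  summable_mul_qParam_pow (C := 1) (fun n => by simpa using norm_sigma_one_le n) hz

lemma E2_eq_one_sub_qSeries (τ : ℂ) : E2 τ = 1 - 24 * qSeries (fun n => (σ 1 n : ℂ)) τ := by
  rw [E2, qSeries, sigma1_eq_sigma_one,
    ← Nat.succ_injective.tsum_eq (f := fun n => (σ 1 n : ℂ) * qParam 1 τ ^ n)]
  · congr 2
    refine tsum_congr fun n => ?_
    simp only [qParam, ofReal_one, div_one, ← Complex.exp_nat_mul, Nat.succ_eq_add_one]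
    push_cast
    ring_nf
  · intro n hn
    have hn0 : n ≠ 0 := by
      rintro rfl
      simp at hn
    exact ⟨n - 1, Nat.succ_pred_eq_of_ne_zero hn0⟩

lemma E2_add_natCast (τ : ℂ) (b : ℕ) : E2 (τ + b) = E2 τ := by
  rw [E2_eq_one_sub_qSeries, E2_eq_one_sub_qSeries, qSeries_add_natCast]

lemma qSeries_sigma_one_prime_mul {N : ℕ} (hN : N.Prime) {τ : ℂ} (hτ : 0 < τ.im) :
    qSeries (fun m => (σ 1 (N * m) : ℂ)) τ =
      (N + 1) * qSeries (fun n => (σ 1 n : ℂ)) τ - N * qSeries (fun n => (σ 1 n : ℂ)) (N * τ) := by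
  set c : ℕ → ℂ := fun n : ℕ => if N ∣ n then (σ 1 (n / N) : ℂ) else 0
  have hc (n : ℕ) : ‖c n‖ ≤ 1 * n ^ 2 := by
    simp only [c, one_mul]
    split_ifs
    · exact (norm_sigma_one_le _).trans (by gcongr; exact_mod_cast Nat.div_le_self n N)
    · simp
  have hcoef (m : ℕ) : (σ 1 (N * m) : ℂ) = (N + 1) * σ 1 m - N * c m := by
    have h := sigma_one_prime_mul_add hN m
    rw [eq_sub_iff_add_eq]
    simp only [c]
    split_ifs at h ⊢ <;> exact_mod_cast h
  rw [qSeries_natCast_mul hN.ne_zero, qSeries, qSeries, qSeries, ← tsum_mul_left, ← tsum_mul_left,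
    ← Summable.tsum_sub ((summable_sigma_one_mul_qParam_pow hτ).mul_left _)
      ((summable_mul_qParam_pow hc hτ).mul_left _)]
  congr 1 with m
  rw [hcoef]
  ring

theorem sum_E2_add_div {N : ℕ} (hN : N.Prime) {τ : ℂ} (hτ : 0 < τ.im) :
    ∑ b ∈ range N, E2 ((τ + b) / N) = N * ((N + 1) * E2 τ - N * E2 (N * τ)) := by
  simp only [E2_eq_one_sub_qSeries, sum_sub_distrib, ← mul_sum]
  rw [sum_qSeries_add_div hN.ne_zero (fun _ => summable_sigma_one_mul_qParam_pow) hτ,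
    qSeries_sigma_one_prime_mul hN hτ]
  simp only [sum_const, card_range, nsmul_eq_mul]
  ring

/-- For prime N, E₂^{(N)} is an eigenform of the Atkin–Lehner operator U_N with
eigenvalue +1: ∑_{b=0}^{N−1} E₂^{(N)}((τ+b)/N) = N·E₂^{(N)}(τ). -/
theorem E2N_atkinLehner_eigen (N : ℕ) (hN : N.Prime) (τ : ℂ) (hτ : 0 < τ.im) :
    ∑ b ∈ Finset.range N, E2N N ((τ + (b : ℂ)) / (N : ℂ)) = (N : ℂ) * E2N N τ := by
  have hN0 : (N : ℂ) ≠ 0 := Nat.cast_ne_zero.mpr hN.ne_zero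
  have hN1 : (N : ℂ) - 1 ≠ 0 := sub_ne_zero.mpr (Nat.cast_ne_one.mpr hN.ne_one)
  have hE2 (b : ℕ) : E2 (N * ((τ + b) / N)) = E2 τ := by
    rw [mul_div_cancel₀ _ hN0, E2_add_natCast]
  simp only [E2N, ← sum_div, sum_sub_distrib, hE2, sum_const, card_range, nsmul_eq_mul,
    sum_E2_add_div hN hτ]
  field_simp
  ring
end

section
/- Let ∑_{n≥1} c(n)·qⁿ = q·∏_{m≥1}(1−q^m)²·(1−q^{11m})² as a formal power series in q (the q-expansion of the weight-two level-11 cusp form η(τ)²η(11τ)²). Then c(11·n) = c(n) for every positive integer n; that is, η(τ)²η(11τ)² is an eigenform of the Atkin–Lehner operator U₁₁ with eigenvalue +1. -/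
/-!
Write `E = ∏ (1 - Xᵐ) = ∑ₖ (-1)ᵏ X^{P(k)}`, `P(k) = k(3k - 1)/2` (Euler's pentagonal number
theorem), so that the series is `X E² E(X¹¹)²`. Atkin's operator `U₁₁ : ∑ aₙ Xⁿ ↦ ∑ a₁₁ₙ Xⁿ`
satisfies `U₁₁ (f · g(X¹¹)) = U₁₁ f · g`, so it is enough to show `U₁₁ (X E²) = X E(X¹¹)²`, i.e.
that the coefficients of `E²` in degrees `11m + 10` are those of `E(X¹¹)²` in degree `m`.
Modulo 11, `P(k)` only takes the values `0, 1, 2, 4, 5, 7`, so two pentagonal numbers add up to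
`10 mod 11` only if both are `5 mod 11`, which forces `k ≡ 2 mod 11`. Writing `k = 2 - 11j`, we get
`P(k) = 121 P(j) + 5` with the same sign, so in these degrees `E²` may be replaced by
`(X⁵ E(X¹²¹))² = X¹⁰ E(X¹²¹)²`.
-/

open Filter

namespace PowerSeries

variable {R : Type*} [CommRing R]

noncomputable def atkinU (p : ℕ) (f : R⟦X⟧) : R⟦X⟧ := mk fun n ↦ coeff (p * n) f

@[simp]
theorem coeff_atkinU (p n : ℕ) (f : R⟦X⟧) : coeff n (atkinU p f) = coeff (p * n) f :=
  coeff_mk _ _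

variable {p : ℕ} (hp : p ≠ 0)

theorem coeff_mul_expand_eq_zero {f : R⟦X⟧} (hf : ∀ n, coeff (p * n) f = 0) (g : R⟦X⟧)
    (n : ℕ) : coeff (p * n) (f * expand p hp g) = 0 := by
  rw [coeff_mul]
  refine Finset.sum_eq_zero fun x hx ↦ ?_
  rw [Finset.HasAntidiagonal.mem_antidiagonal] at hx
  by_cases hdvd : p ∣ x.2
  · obtain ⟨k, hk⟩ : p ∣ x.1 := (Nat.dvd_add_left hdvd).mp (hx ▸ dvd_mul_right p n)
    rw [hk, hf, zero_mul]
  · rw [coeff_expand_of_not_dvd p hp g hdvd, mul_zero]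

theorem atkinU_mul_expand (f g : R⟦X⟧) : atkinU p (f * expand p hp g) = atkinU p f * g := by
  ext n
  rw [coeff_atkinU]
  have hrest : ∀ k, coeff (p * k) (f - expand p hp (atkinU p f)) = 0 := by simp
  calc coeff (p * n) (f * expand p hp g)
      = coeff (p * n) (expand p hp (atkinU p f * g))
        + coeff (p * n) ((f - expand p hp (atkinU p f)) * expand p hp g) := by
        rw [← map_add, map_mul (expand p hp), ← add_mul, add_sub_cancel]
    _ = coeff n (atkinU p f * g) := by
        rw [coeff_mul_expand_eq_zero hp hrest, add_zero, coeff_expand_mul]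

end PowerSeries

theorem pentagonal_two_sub_eleven_mul (j : ℤ) :
    pentagonal (2 - 11 * j) = 121 * pentagonal j + 5 := by
  have h := two_mul_natCast_pentagonal (2 - 11 * j)
  have hj := two_mul_natCast_pentagonal j
  have : 2 * (pentagonal (2 - 11 * j) : ℤ) = 2 * (121 * pentagonal j + 5) := by
    linear_combination h - 121 * hj
  omega

-- `6 = 2⁻¹` in `ZMod 11`
theorem natCast_pentagonal_zmod_eleven (k : ℤ) :
    (pentagonal k : ZMod 11) = 6 * k * (3 * k - 1) := by
  have h := congrArg (Int.cast : ℤ → ZMod 11) (two_mul_natCast_pentagonal k)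
  have h11 : (11 : ZMod 11) = 0 := by decide
  push_cast at h
  linear_combination (6 : ZMod 11) * h - (pentagonal k : ZMod 11) * h11

theorem exists_eq_two_sub_eleven_mul_of_pentagonal_add_pentagonal {a b : ℤ}
    (h : (pentagonal a + pentagonal b) % 11 = 10) :
    ∃ i j : ℤ, a = 2 - 11 * i ∧ b = 2 - 11 * j := by
  have hmod : ((pentagonal a + pentagonal b : ℕ) : ZMod 11) = 10 := by
    rw [← Nat.mod_add_div (pentagonal a + pentagonal b) 11, h]
    push_cast
    rw [show (11 : ZMod 11) = 0 by decide]
    ring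
  push_cast [natCast_pentagonal_zmod_eleven] at hmod
  have hresidues : ∀ x y : ZMod 11,
      6 * x * (3 * x - 1) + 6 * y * (3 * y - 1) = 10 → x = 2 ∧ y = 2 := by
    decide
  obtain ⟨ha, hb⟩ := hresidues _ _ hmod
  rw [← Int.cast_ofNat, ZMod.intCast_eq_intCast_iff_dvd_sub] at ha hb
  obtain ⟨i, hi⟩ := ha
  obtain ⟨j, hj⟩ := hb
  exact ⟨i, j, by omega, by omega⟩

namespace PowerSeries

variable (R : Type*) [CommRing R]

theorem coeff_pentagonalSeries_121_mul_add_five (k : ℕ) :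
    coeff (121 * k + 5) (pentagonalSeries R) = coeff k (pentagonalSeries R) := by
  by_cases hk : k ∈ Set.range pentagonal
  · obtain ⟨j, rfl⟩ := hk
    rw [← pentagonal_two_sub_eleven_mul, coeff_pentagonalSeries_pentagonal,
      coeff_pentagonalSeries_pentagonal,
      (Int.negOnePow_eq_iff (2 - 11 * j) j).mpr ⟨1 - 6 * j, by ring⟩]
  · rw [coeff_pentagonalSeries_eq_zero R hk, coeff_pentagonalSeries_eq_zero]
    rintro ⟨J, hJ⟩
    obtain ⟨i, -, rfl, -⟩ := exists_eq_two_sub_eleven_mul_of_pentagonal_add_pentagonal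
      (a := J) (b := J) (by omega)
    rw [pentagonal_two_sub_eleven_mul] at hJ
    exact hk ⟨i, by omega⟩

theorem coeff_X_pow_five_mul_expand_pentagonalSeries (n : ℕ) :
    coeff n (X ^ 5 * expand 121 (by norm_num) (pentagonalSeries R)) =
      if n % 121 = 5 then coeff n (pentagonalSeries R) else 0 := by
  rw [coeff_X_pow_mul', coeff_expand]
  split_ifs with h5 hdvd hmod hmod <;> try first | rfl | omega
  obtain ⟨k, hk⟩ := hdvd
  rw [hk, Nat.mul_div_cancel_left _ (by norm_num), show n = 121 * k + 5 by omega,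
    coeff_pentagonalSeries_121_mul_add_five]

theorem coeff_mul_coeff_pentagonalSeries_of_add_mod_eleven {a b : ℕ} (h : (a + b) % 11 = 10) :
    coeff a (pentagonalSeries R) * coeff b (pentagonalSeries R) =
      coeff a (X ^ 5 * expand 121 (by norm_num) (pentagonalSeries R)) *
        coeff b (X ^ 5 * expand 121 (by norm_num) (pentagonalSeries R)) := by
  simp only [coeff_X_pow_five_mul_expand_pentagonalSeries]
  by_cases hab : a % 121 = 5 ∧ b % 121 = 5
  · rw [if_pos hab.1, if_pos hab.2]
  suffices hzero : coeff a (pentagonalSeries R) = 0 ∨ coeff b (pentagonalSeries R) = 0 by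
    rcases hzero with h0 | h0 <;> simp [h0]
  by_contra! hne
  obtain ⟨i, rfl⟩ : a ∈ Set.range pentagonal :=
    by_contra fun ha ↦ hne.1 (coeff_pentagonalSeries_eq_zero R ha)
  obtain ⟨j, rfl⟩ : b ∈ Set.range pentagonal :=
    by_contra fun hb ↦ hne.2 (coeff_pentagonalSeries_eq_zero R hb)
  obtain ⟨i, j, rfl, rfl⟩ := exists_eq_two_sub_eleven_mul_of_pentagonal_add_pentagonal h
  simp only [pentagonal_two_sub_eleven_mul] at hab
  omega

theorem coeff_sq_pentagonalSeries_eleven_mul_add_ten (m : ℕ) :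
    coeff (11 * m + 10) (pentagonalSeries R ^ 2) =
      coeff m (expand 11 (by norm_num) (pentagonalSeries R ^ 2)) := by
  set E := pentagonalSeries R
  calc coeff (11 * m + 10) (E ^ 2)
      = coeff (11 * m + 10) ((X ^ 5 * expand 121 (by norm_num) E) ^ 2) := by
        rw [sq, sq, coeff_mul, coeff_mul]
        refine Finset.sum_congr rfl fun x hx ↦ ?_
        rw [Finset.HasAntidiagonal.mem_antidiagonal] at hx
        exact coeff_mul_coeff_pentagonalSeries_of_add_mod_eleven R (by omega)
    _ = coeff (11 * m + 10) (X ^ 10 * expand (11 * 11) (by norm_num) (E ^ 2)) := by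
        rw [mul_pow, map_pow, ← pow_mul]
    _ = coeff m (expand 11 (by norm_num) (E ^ 2)) := by
        rw [coeff_X_pow_mul, expand_mul 11 (by norm_num), coeff_expand_mul]

theorem atkinU_X_mul_sq_pentagonalSeries :
    atkinU 11 (X * pentagonalSeries R ^ 2) =
      X * expand 11 (by norm_num) (pentagonalSeries R ^ 2) := by
  ext (_ | m)
  · simp
  · rw [coeff_atkinU, show 11 * (m + 1) = 11 * m + 10 + 1 by ring, coeff_succ_X_mul,
      coeff_succ_X_mul, coeff_sq_pentagonalSeries_eleven_mul_add_ten]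

noncomputable def etaSquaredEleven : R⟦X⟧ :=
  X * pentagonalSeries R ^ 2 * expand 11 (by norm_num) (pentagonalSeries R ^ 2)

theorem atkinU_etaSquaredEleven : atkinU 11 (etaSquaredEleven R) = etaSquaredEleven R := by
  rw [etaSquaredEleven, atkinU_mul_expand, atkinU_X_mul_sq_pentagonalSeries, mul_right_comm]

theorem X_mul_prod_Icc_eq_X_mul_sq_mul_expand_sq (N : ℕ) :
    (X * ∏ m ∈ Finset.Icc 1 N, ((1 - X ^ m) ^ 2 * (1 - X ^ (11 * m)) ^ 2) : R⟦X⟧) =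
      X * (∏ m ∈ Finset.Icc 1 N, (1 - X ^ m)) ^ 2 *
        expand 11 (by norm_num) ((∏ m ∈ Finset.Icc 1 N, (1 - X ^ m)) ^ 2) := by
  simp [Finset.prod_mul_distrib, Finset.prod_pow, map_prod, pow_mul, mul_assoc]

section Topology

open scoped Topology PowerSeries.WithPiTopology

theorem WithPiTopology.continuous_expand [TopologicalSpace R] (p : ℕ) (hp : p ≠ 0) :
    Continuous (expand p hp : R⟦X⟧ → R⟦X⟧) := by
  refine continuous_iff_continuousAt.mpr fun f ↦ ?_
  rw [ContinuousAt, WithPiTopology.tendsto_iff_coeff_tendsto]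
  intro d
  simp_rw [coeff_expand]
  split_ifs
  · exact (WithPiTopology.continuous_coeff R _).tendsto f
  · exact tendsto_const_nhds

theorem coeff_X_mul_prod_Icc_eventually_eq (n : ℕ) :
    ∀ᶠ N in atTop, coeff n (X * ∏ m ∈ Finset.Icc 1 N,
      ((1 - X ^ m) ^ 2 * (1 - X ^ (11 * m)) ^ 2) : R⟦X⟧) = coeff n (etaSquaredEleven R) := by
  let : TopologicalSpace R := ⊥
  have : DiscreteTopology R := ⟨rfl⟩
  have hP : Tendsto (fun N ↦ ∏ m ∈ Finset.Icc 1 N, (1 - X ^ m : R⟦X⟧)) atTop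
      (𝓝 (pentagonalSeries R)) := by
    simp_rw [← Finset.Ico_add_one_right_eq_Icc, Finset.prod_Ico_eq_prod_range,
      Nat.add_sub_cancel, add_comm 1]
    exact (WithPiTopology.hasProd_one_sub_X_pow R).comp tendsto_finset_range
  have hlim : Tendsto (fun N ↦ X * ∏ m ∈ Finset.Icc 1 N,
      ((1 - X ^ m) ^ 2 * (1 - X ^ (11 * m)) ^ 2) : ℕ → R⟦X⟧) atTop
      (𝓝 (etaSquaredEleven R)) := by
    simp_rw [X_mul_prod_Icc_eq_X_mul_sq_mul_expand_sq]
    exact (tendsto_const_nhds.mul (hP.pow 2)).mul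
      (((WithPiTopology.continuous_expand R 11 (by norm_num)).tendsto _).comp (hP.pow 2))
  rw [WithPiTopology.tendsto_iff_coeff_tendsto] at hlim
  simpa only [nhds_discrete, tendsto_pure] using hlim n

end Topology

end PowerSeries

/-- If c(n) are the q-expansion coefficients of η(τ)²η(11τ)², i.e.
∑ c(n) qⁿ = q·∏_{m≥1}(1−q^m)²(1−q^{11m})² (the coefficients stabilize under truncation
of the product to m ≤ N for any N ≥ n), then c(11n) = c(n) for all n ≥ 1: it is an
eigenform of the Atkin–Lehner operator U₁₁ with eigenvalue +1. -/
theorem eta_squared_eleven_atkinLehner (c : ℕ → ℤ)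
    (hc : ∀ n N : ℕ, n ≤ N →
      c n = PowerSeries.coeff (R := ℤ) n
        (PowerSeries.X * ∏ m ∈ Finset.Icc 1 N,
          ((1 - PowerSeries.X ^ m) ^ 2 * (1 - PowerSeries.X ^ (11 * m)) ^ 2))) :
    ∀ n : ℕ, 0 < n → c (11 * n) = c n := by
  have hc_coeff : ∀ k, c k = PowerSeries.coeff k (PowerSeries.etaSquaredEleven ℤ) := fun k ↦ by
    obtain ⟨N, hkN, hN⟩ := ((eventually_ge_atTop k).and
      (PowerSeries.coeff_X_mul_prod_Icc_eventually_eq ℤ k)).exists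
    rw [hc k N hkN, hN]
  intro n _
  rw [hc_coeff, hc_coeff, ← PowerSeries.coeff_atkinU, PowerSeries.atkinU_etaSquaredEleven]
end
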